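/- arXiv:2505.20295 — 3 statements merged into one kernel-verified Lean document; each statement's English description precedes it below -/
import Mathlib

section
/- Let V be a finite nonempty type, L a natural number, and let A be a random variable taking values in a finite nonempty type 𝒜 and B a random variable taking values in the product type Fin L → V, on a common probability space, with strictly positive joint probability mass function (P(A=a, B=x) > 0 for all a and all x : Fin L → V). Let ψ : 𝒜 → 𝒮 be a function into a finite type 𝒮 and set S := ψ(A). Then P(B=x | A=a) = P(B=x | S=ψ(a)) for all a ∈ 𝒜 and x : Fin L → V, if and only if for every coordinate i : Fin L, every a ∈ 𝒜, every x : Fin L → V and every v ∈ V, P(B_i = v | A=a, B_{-i} = x_{-i}) = P(B_i = v | S=ψ(a), B_{-i} = x_{-i}). -/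
open Classical

/-- Probability of an event `E` under the pmf `μ` on a finite sample space `Ω`. -/
noncomputable def pr {Ω : Type*} [Fintype Ω] (μ : Ω → ℝ) (E : Ω → Prop) : ℝ :=
  ∑ ω, if E ω then μ ω else 0

/-- Conditional probability `P(E | F) = P(E ∧ F) / P(F)`. -/
noncomputable def cpr {Ω : Type*} [Fintype Ω] (μ : Ω → ℝ) (E F : Ω → Prop) : ℝ :=
  pr μ (fun ω => E ω ∧ F ω) / pr μ F

lemma pr_congr {Ω : Type*} [Fintype Ω] (μ : Ω → ℝ) {E F : Ω → Prop}
    (h : ∀ ω, E ω ↔ F ω) : pr μ E = pr μ F := by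
  unfold pr
  exact Finset.sum_congr rfl fun ω _ => by simp [h ω]

lemma pr_mono {Ω : Type*} [Fintype Ω] {μ : Ω → ℝ} (hμ0 : ∀ ω, 0 ≤ μ ω)
    {E F : Ω → Prop} (h : ∀ ω, E ω → F ω) : pr μ E ≤ pr μ F := by
  unfold pr
  apply Finset.sum_le_sum
  intro ω _
  by_cases hE : E ω
  · simp [hE, h ω hE]
  · have h0 : (0:ℝ) ≤ if F ω then μ ω else 0 := by
      split_ifs
      exacts [hμ0 ω, le_rfl]
    simpa [hE] using h0

lemma pr_partition {Ω γ : Type*} [Fintype Ω] [Fintype γ] (μ : Ω → ℝ)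
    (C : Ω → γ) (P : Ω → Prop) :
    pr μ P = ∑ c, pr μ (fun ω => C ω = c ∧ P ω) := by
  unfold pr
  rw [Finset.sum_comm]
  apply Finset.sum_congr rfl
  intro ω _
  symm
  by_cases hP : P ω
  · simp [hP, Finset.sum_ite_eq]
  · simp [hP]

/-- Forward direction, abstractly: proportional functions give equal
single-site conditionals. -/
lemma aux_forward {V : Type*} [Fintype V] {L : ℕ} (f g : (Fin L → V) → ℝ)
    (c : ℝ) (hc : 0 < c) (key : ∀ y, f y = g y * c)
    (i : Fin L) (x : Fin L → V) (v : V) :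
    f (Function.update x i v) / ∑ w : V, f (Function.update x i w) =
      g (Function.update x i v) / ∑ w : V, g (Function.update x i w) := by
  calc f (Function.update x i v) / ∑ w : V, f (Function.update x i w)
      = (g (Function.update x i v) * c) /
          ((∑ w : V, g (Function.update x i w)) * c) := by
        rw [key, Finset.sum_mul]
        congr 1
        exact Finset.sum_congr rfl fun w _ => key _
    _ = g (Function.update x i v) / ∑ w : V, g (Function.update x i w) :=
        mul_div_mul_right _ _ hc.ne'

/-- Backward direction, abstractly: equal single-site conditionals for positive
functions force a constant ratio. -/
lemma aux_backward {V : Type*} [Fintype V] [Nonempty V] {L : ℕ}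
    (f g : (Fin L → V) → ℝ) (hf : ∀ y, 0 < f y) (hg : ∀ y, 0 < g y)
    (h : ∀ (i : Fin L) (x : Fin L → V) (v : V),
      f (Function.update x i v) / ∑ w : V, f (Function.update x i w) =
        g (Function.update x i v) / ∑ w : V, g (Function.update x i w))
    (x y : Fin L → V) : f x / g x = f y / g y := by
  have one : ∀ (i : Fin L) (z : Fin L → V) (v w : V),
      f (Function.update z i v) / g (Function.update z i v) =
        f (Function.update z i w) / g (Function.update z i w) := by
    intro i z v w
    have Dpos : 0 < ∑ u : V, f (Function.update z i u) :=
      Finset.sum_pos (fun u _ => hf _) Finset.univ_nonempty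
    have Dpos' : 0 < ∑ u : V, g (Function.update z i u) :=
      Finset.sum_pos (fun u _ => hg _) Finset.univ_nonempty
    have hv := h i z v
    have hw := h i z w
    rw [div_eq_div_iff Dpos.ne' Dpos'.ne'] at hv hw
    rw [div_eq_div_iff (hg _).ne' (hg _).ne']
    apply mul_right_cancel₀ (mul_pos Dpos Dpos').ne'
    calc f (Function.update z i v) * g (Function.update z i w) *
          ((∑ u : V, f (Function.update z i u)) * (∑ u : V, g (Function.update z i u)))
        = (f (Function.update z i v) * (∑ u : V, g (Function.update z i u))) *
            (g (Function.update z i w) * (∑ u : V, f (Function.update z i u))) := by ring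
      _ = (g (Function.update z i v) * (∑ u : V, f (Function.update z i u))) *
            (f (Function.update z i w) * (∑ u : V, g (Function.update z i u))) := by
          rw [hv, hw]
      _ = f (Function.update z i w) * g (Function.update z i v) *
          ((∑ u : V, f (Function.update z i u)) * (∑ u : V, g (Function.update z i u))) := by
          ring
  have key : ∀ k : ℕ, ∀ x y : Fin L → V,
      (∀ i : Fin L, k ≤ (i : ℕ) → x i = y i) → f x / g x = f y / g y := by
    intro k
    induction k with
    | zero =>
      intro x y hxy
      have : x = y := funext fun i => hxy i (Nat.zero_le _)
      rw [this]
    | succ k ih =>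
      intro x y hxy
      by_cases hkL : k < L
      · set i0 : Fin L := ⟨k, hkL⟩ with hi0
        set x' := Function.update x i0 (y i0) with hx'
        have h1 : f x / g x = f x' / g x' := by
          have := one i0 x (x i0) (y i0)
          rwa [Function.update_eq_self] at this
        have h2 : f x' / g x' = f y / g y := by
          apply ih
          intro i hi
          by_cases hii : i = i0
          · subst hii; simp [hx']
          · rw [hx', Function.update_of_ne hii]
            apply hxy
            have : (i : ℕ) ≠ k := fun hc => hii (Fin.ext hc)
            omega
        rw [h1, h2]
      · apply ih
        intro i hi
        exact absurd (lt_of_le_of_lt hi i.isLt) (by omega)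
  exact key L x y (fun i hi => absurd i.isLt (by omega))

theorem stmt5 {Ω V 𝒜 𝒮 : Type*} [Fintype Ω] [Nonempty Ω]
    [Fintype V] [Nonempty V] [Fintype 𝒜] [Nonempty 𝒜] [Fintype 𝒮] {L : ℕ}
    (μ : Ω → ℝ) (hμ0 : ∀ ω, 0 ≤ μ ω) (hμ1 : ∑ ω, μ ω = 1)
    (A : Ω → 𝒜) (B : Ω → (Fin L → V))
    (hpos : ∀ (a : 𝒜) (x : Fin L → V), 0 < pr μ (fun ω => A ω = a ∧ B ω = x))
    (ψ : 𝒜 → 𝒮) :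
    (∀ (a : 𝒜) (x : Fin L → V),
        cpr μ (fun ω => B ω = x) (fun ω => A ω = a) =
          cpr μ (fun ω => B ω = x) (fun ω => ψ (A ω) = ψ a)) ↔
      (∀ (i : Fin L) (a : 𝒜) (x : Fin L → V) (v : V),
        pr μ (fun ω => B ω = Function.update x i v ∧ A ω = a) /
            ∑ w : V, pr μ (fun ω => B ω = Function.update x i w ∧ A ω = a) =
          pr μ (fun ω => B ω = Function.update x i v ∧ ψ (A ω) = ψ a) /
            ∑ w : V, pr μ (fun ω => B ω = Function.update x i w ∧ ψ (A ω) = ψ a)) := by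
  have hf : ∀ (a : 𝒜) (y : Fin L → V),
      0 < pr μ (fun ω => B ω = y ∧ A ω = a) := by
    intro a y
    have := hpos a y
    rwa [pr_congr μ (fun ω => and_comm)] at this
  have hg : ∀ (a : 𝒜) (y : Fin L → V),
      0 < pr μ (fun ω => B ω = y ∧ ψ (A ω) = ψ a) := by
    intro a y
    refine lt_of_lt_of_le (hf a y) (pr_mono hμ0 ?_)
    rintro ω ⟨h1, h2⟩
    exact ⟨h1, by rw [h2]⟩
  have hF : ∀ a : 𝒜, pr μ (fun ω => A ω = a) =
      ∑ y : Fin L → V, pr μ (fun ω => B ω = y ∧ A ω = a) :=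
    fun a => pr_partition μ B _
  have hG : ∀ a : 𝒜, pr μ (fun ω => ψ (A ω) = ψ a) =
      ∑ y : Fin L → V, pr μ (fun ω => B ω = y ∧ ψ (A ω) = ψ a) :=
    fun a => pr_partition μ B _
  have hFpos : ∀ a : 𝒜, 0 < pr μ (fun ω => A ω = a) := by
    intro a; rw [hF a]
    exact Finset.sum_pos (fun y _ => hf a y) Finset.univ_nonempty
  have hGpos : ∀ a : 𝒜, 0 < pr μ (fun ω => ψ (A ω) = ψ a) := by
    intro a; rw [hG a]
    exact Finset.sum_pos (fun y _ => hg a y) Finset.univ_nonempty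
  -- cpr equality rephrased
  have hcpr : ∀ (a : 𝒜) (y : Fin L → V),
      (cpr μ (fun ω => B ω = y) (fun ω => A ω = a) =
        cpr μ (fun ω => B ω = y) (fun ω => ψ (A ω) = ψ a)) ↔
      pr μ (fun ω => B ω = y ∧ A ω = a) * pr μ (fun ω => ψ (A ω) = ψ a) =
        pr μ (fun ω => B ω = y ∧ ψ (A ω) = ψ a) * pr μ (fun ω => A ω = a) := by
    intro a y
    unfold cpr
    rw [div_eq_div_iff (hFpos a).ne' (hGpos a).ne']
  constructor
  · intro h i a x v
    apply aux_forward (fun y => pr μ (fun ω => B ω = y ∧ A ω = a))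
      (fun y => pr μ (fun ω => B ω = y ∧ ψ (A ω) = ψ a))
      (pr μ (fun ω => A ω = a) / pr μ (fun ω => ψ (A ω) = ψ a))
      (div_pos (hFpos a) (hGpos a))
    intro y
    have := (hcpr a y).mp (h a y)
    rw [mul_div_assoc', eq_div_iff (hGpos a).ne']
    linarith [this]
  · intro h a x
    have R := aux_backward (fun y => pr μ (fun ω => B ω = y ∧ A ω = a))
      (fun y => pr μ (fun ω => B ω = y ∧ ψ (A ω) = ψ a))
      (hf a) (hg a) (fun i z v => h i a z v) x
    rw [hcpr a x]
    have cross : ∀ y, pr μ (fun ω => B ω = x ∧ A ω = a) *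
        pr μ (fun ω => B ω = y ∧ ψ (A ω) = ψ a) =
        pr μ (fun ω => B ω = x ∧ ψ (A ω) = ψ a) *
        pr μ (fun ω => B ω = y ∧ A ω = a) := by
      intro y
      have := R y
      rw [div_eq_div_iff (hg a x).ne' (hg a y).ne'] at this
      linarith [this]
    rw [hF a, hG a, Finset.mul_sum, Finset.mul_sum]
    exact Finset.sum_congr rfl fun y _ => cross y
end

section
/- Let V be a finite nonempty type and L a natural number, and let p and q be strictly positive probability mass functions on Fin L → V. Then p = q if and only if p and q have equal one-site conditionals at every coordinate i : Fin L, i.e., for every i, every x : Fin L → V and every v ∈ V, p(x[i:=v]) / Σ_{w∈V} p(x[i:=w]) = q(x[i:=v]) / Σ_{w∈V} q(x[i:=w]). -/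
theorem stmt6 {V : Type*} [Fintype V] [Nonempty V] {L : ℕ}
    (p q : (Fin L → V) → ℝ)
    (hp0 : ∀ x, 0 < p x) (hp1 : ∑ x, p x = 1)
    (hq0 : ∀ x, 0 < q x) (hq1 : ∑ x, q x = 1) :
    p = q ↔
      ∀ (i : Fin L) (x : Fin L → V) (v : V),
        p (Function.update x i v) / ∑ w : V, p (Function.update x i w) =
          q (Function.update x i v) / ∑ w : V, q (Function.update x i w) := by
  constructor
  · rintro rfl
    intro i x v
    rfl
  · intro h
    classical
    -- Lemma A: ratio invariant under single-site update
    have ratioA : ∀ (i : Fin L) (x : Fin L → V) (v : V),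
        p (Function.update x i v) / q (Function.update x i v) = p x / q x := by
      intro i x v
      have hSp : 0 < ∑ w : V, p (Function.update x i w) :=
        Finset.sum_pos (fun w _ => hp0 _) Finset.univ_nonempty
      have hSq : 0 < ∑ w : V, q (Function.update x i w) :=
        Finset.sum_pos (fun w _ => hq0 _) Finset.univ_nonempty
      have h1 := h i x v
      have h2 := h i x (x i)
      rw [Function.update_eq_self] at h2
      rw [div_eq_div_iff hSp.ne' hSq.ne'] at h1
      rw [div_eq_div_iff hSp.ne' hSq.ne'] at h2
      rw [div_eq_div_iff (hq0 _).ne' (hq0 _).ne']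
      apply mul_right_cancel₀ hSq.ne'
      linear_combination q x * h1 - q (Function.update x i v) * h2
    -- Lemma B: ratio is constant
    have ratioB : ∀ (n : ℕ) (x y : Fin L → V),
        (Finset.univ.filter (fun i => x i ≠ y i)).card = n → p x / q x = p y / q y := by
      intro n
      induction n with
      | zero =>
        intro x y hc
        have : x = y := by
          funext i
          by_contra hne
          have : i ∈ Finset.univ.filter (fun i => x i ≠ y i) := by simp [hne]
          rw [Finset.card_eq_zero] at hc
          simp [hc] at this
        rw [this]
      | succ n ih =>
        intro x y hc
        have hne : (Finset.univ.filter (fun i => x i ≠ y i)).Nonempty := by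
          rw [← Finset.card_pos, hc]; omega
        obtain ⟨i, hi⟩ := hne
        have hxi : x i ≠ y i := by simpa using hi
        set x' := Function.update x i (y i) with hx'
        have hcard : (Finset.univ.filter (fun j => x' j ≠ y j)).card = n := by
          have hset : Finset.univ.filter (fun j => x' j ≠ y j)
              = (Finset.univ.filter (fun j => x j ≠ y j)).erase i := by
            ext j
            by_cases hji : j = i
            · subst hji
              simp [hx', Function.update_self]
            · simp [hx', Function.update_of_ne hji, hji]
          rw [hset, Finset.card_erase_of_mem hi, hc]; omega
        have := ih x' y hcard
        rw [← this, hx', ratioA]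
    have hconst : ∀ x y : Fin L → V, p x / q x = p y / q y := fun x y =>
      ratioB _ x y rfl
    funext y
    have hy : ∀ x, p x * q y = q x * p y := by
      intro x
      have := hconst x y
      rw [div_eq_div_iff (hq0 x).ne' (hq0 y).ne'] at this
      linarith [this]
    have hsum : (∑ x, p x) * q y = (∑ x, q x) * p y := by
      rw [Finset.sum_mul, Finset.sum_mul]
      exact Finset.sum_congr rfl fun x _ => hy x
    rw [hp1, hq1, one_mul, one_mul] at hsum
    exact hsum.symm
end

section
/- Let V be a finite nonempty type and L a natural number, and let p and q be strictly positive probability mass functions on Fin L → V such that for every coordinate i : Fin L, every x : Fin L → V and every v ∈ V, p(x[i:=v]) / Σ_{w∈V} p(x[i:=w]) = q(x[i:=v]) / Σ_{w∈V} q(x[i:=w]). Then the ratio p/q is constant: for all x, y : Fin L → V, p(x) · q(y) = p(y) · q(x). -/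
theorem stmt7 {V : Type*} [Fintype V] [Nonempty V] {L : ℕ}
    (p q : (Fin L → V) → ℝ)
    (hp0 : ∀ x, 0 < p x) (hp1 : ∑ x, p x = 1)
    (hq0 : ∀ x, 0 < q x) (hq1 : ∑ x, q x = 1)
    (hcond : ∀ (i : Fin L) (x : Fin L → V) (v : V),
      p (Function.update x i v) / ∑ w : V, p (Function.update x i w) =
        q (Function.update x i v) / ∑ w : V, q (Function.update x i w)) :
    ∀ x y : Fin L → V, p x * q y = p y * q x := by
  -- one-step lemma
  have step : ∀ (i : Fin L) (x : Fin L → V) (v : V),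
      p (Function.update x i v) * q x = p x * q (Function.update x i v) := by
    intro i x v
    have hS : 0 < ∑ w : V, p (Function.update x i w) :=
      Finset.sum_pos (fun w _ => hp0 _) Finset.univ_nonempty
    have hT : 0 < ∑ w : V, q (Function.update x i w) :=
      Finset.sum_pos (fun w _ => hq0 _) Finset.univ_nonempty
    have h1 := hcond i x v
    have h2 := hcond i x (x i)
    rw [Function.update_eq_self] at h2
    rw [div_eq_div_iff hS.ne' hT.ne'] at h1 h2
    nlinarith [hp0 x, hq0 x, hp0 (Function.update x i v), hq0 (Function.update x i v)]
  have main : ∀ s : Finset (Fin L), ∀ x y : Fin L → V,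
      (∀ i ∉ s, x i = y i) → p x * q y = p y * q x := by
    intro s
    induction s using Finset.induction_on with
    | empty =>
      intro x y h
      have : x = y := funext fun i => h i (Finset.notMem_empty i)
      rw [this, mul_comm]
    | @insert i s hi ih =>
      intro x y h
      set x' := Function.update x i (y i) with hx'
      have h1 : p x' * q x = p x * q x' := step i x (y i)
      have h2 : p x' * q y = p y * q x' := by
        apply ih
        intro j hj
        by_cases hji : j = i
        · subst hji; simp [hx']
        · rw [hx', Function.update_of_ne hji]
          exact h j (by simp [hj, hji])
      have hq' : q x' ≠ 0 := (hq0 x').ne'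
      apply mul_right_cancel₀ hq'
      calc p x * q y * q x' = (p x * q x') * q y := by ring
        _ = (p x' * q x) * q y := by rw [h1]
        _ = (p x' * q y) * q x := by ring
        _ = (p y * q x') * q x := by rw [h2]
        _ = p y * q x * q x' := by ring
  intro x y
  exact main Finset.univ x y (fun i hi => absurd (Finset.mem_univ i) hi)
end
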